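/- Define the shift operator θ_t(f) = f(t + ·). If f_n → f in the J1 topology, t_n → t with t > 0, and Δf_n(t_n) → Δf(t), then θ_{t_n}(f_n) → θ_t(f) in the J1 topology. -/

import Mathlib

open scoped NNReal ENNReal Topology
open Filter Set

noncomputable section

/-- A càdlàg function `[0,∞) → V`: right-continuous with left limits
(at every positive time). -/
def Cadlag {V : Type*} [PseudoMetricSpace V] (f : ℝ≥0 → V) : Prop :=
  (∀ t : ℝ≥0, ContinuousWithinAt f (Set.Ici t) t) ∧
  ∀ t : ℝ≥0, 0 < t → ∃ l : V, Filter.Tendsto f (nhdsWithin t (Set.Iio t)) (nhds l)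

/-- A time change: an increasing bijection of `[0,∞)`. -/
def IsTimeChange (l : ℝ≥0 → ℝ≥0) : Prop := StrictMono l ∧ Function.Bijective l

/-- Convergence in the Skorokhod J1 topology, along a filter `F`: there are
time changes `l i` with `‖l i − Id‖_∞ → 0` and uniform convergence of
`f i ∘ l i` to `g` on `[0,m]` for every `m` in some unbounded set. -/
def J1Tendsto {V : Type*} [PseudoMetricSpace V] {ι : Type*} (F : Filter ι)
    (f : ι → ℝ≥0 → V) (g : ℝ≥0 → V) : Prop :=
  ∃ l : ι → ℝ≥0 → ℝ≥0, (∀ i, IsTimeChange (l i)) ∧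
    Filter.Tendsto (fun i => ⨆ s : ℝ≥0, edist (l i s) s) F (nhds 0) ∧
    ∃ M : Set ℝ≥0, (∀ r : ℝ≥0, ∃ m ∈ M, r ≤ m) ∧
      ∀ m ∈ M, Filter.Tendsto
        (fun i => ⨆ s : Set.Icc (0:ℝ≥0) m, edist (f i (l i (s:ℝ≥0))) (g (s:ℝ≥0)))
        F (nhds 0)

/-- First hitting time of `a` : `T(f) = inf{t > 0 : f t = a} ∈ [0,∞]`. -/
def hitTime {V : Type*} [PseudoMetricSpace V] (a : V) (f : ℝ≥0 → V) : ℝ≥0∞ :=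
  sInf ((fun t : ℝ≥0 => (t : ℝ≥0∞)) '' {t : ℝ≥0 | 0 < t ∧ f t = a})

/-- An excursion: a càdlàg path which sticks at `a` from its first hitting
time of `a` on. -/
def IsExcursion {V : Type*} [PseudoMetricSpace V] (a : V) (f : ℝ≥0 → V) : Prop :=
  Cadlag f ∧ ∀ t : ℝ≥0, hitTime a f ≤ (t : ℝ≥0∞) → f t = a

end

noncomputable section

/-- The shift operator `θ_t(f) = f(t + ·)`. -/
def shiftMap {V : Type*} (t : ℝ≥0) (f : ℝ≥0 → V) : ℝ≥0 → V := fun s => f (t + s)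

/-- Jump size `Δf(t) = v(f t, f(t−))` (with `f(0−) = f 0`). -/
def jumpSize {V : Type*} [PseudoMetricSpace V] (f : ℝ≥0 → V) (t : ℝ≥0) : ℝ :=
  dist (f t) (Function.leftLim f t)

end

/-!
Let `l n` witness `f n → F` and put `c n = (l n)⁻¹ (t n)`, so that `c n → t0`. Composing `l n`
with a time change that sends `t0` to `c n` and is the identity off a window of width
`O(|c n - t0|)` around `t0` gives time changes `μ n` with `μ n t0 = t n`, and then
`s ↦ μ n (t0 + s) - t n` witnesses `θ_{t n} f n → θ_{t0} F`. This costs nothing when `F` is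
continuous at `t0`. When `F` jumps at `t0`, the jump of `f n ∘ l n` at `c n`, which is the jump
of `f n` at `t n` and tends to `ΔF(t0)`, is uniformly close to the jump of `F` at `c n`; since the
jumps of `F` at points near but distinct from `t0` are small, eventually `c n = t0`.
-/

/-- `s` plus a tent of height `b - a` and half-width `2 |b - a|` centred at `a`; the tent is
`1 / (2 |b - a|)`-Lipschitz, so `tent a b` is an increasing bijection of `ℝ`. -/
noncomputable def tent (a b s : ℝ) : ℝ := s + (b - a) * max 0 (1 - |s - a| / (2 * |b - a|))

section Tent

variable {a b : ℝ}

lemma tent_self : tent a b a = b := by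
  simp [tent]

lemma tent_eq_self {s : ℝ} (h : 2 * |b - a| ≤ |s - a|) : tent a b s = s := by
  rcases eq_or_ne b a with rfl | hba
  · simp [tent]
  have hpos : 0 < 2 * |b - a| := by positivity
  have : max 0 (1 - |s - a| / (2 * |b - a|)) = 0 :=
    max_eq_left (sub_nonpos.2 ((one_le_div hpos).2 h))
  simp [tent, this]

lemma abs_tent_sub_le (s : ℝ) : |tent a b s - s| ≤ |b - a| := by
  have h0 : 0 ≤ max 0 (1 - |s - a| / (2 * |b - a|)) := le_max_left _ _
  have h1 : max 0 (1 - |s - a| / (2 * |b - a|)) ≤ 1 :=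
    max_le zero_le_one (sub_le_self _ (by positivity))
  rw [tent, add_sub_cancel_left, abs_mul, abs_of_nonneg h0]
  exact mul_le_of_le_one_right (abs_nonneg _) h1

lemma abs_tent_sub_sub_le (x y : ℝ) :
    |(tent a b x - x) - (tent a b y - y)| ≤ |x - y| / 2 := by
  simp only [tent, add_sub_cancel_left, ← mul_sub, abs_mul]
  calc |b - a| * |max 0 (1 - |x - a| / (2 * |b - a|)) - max 0 (1 - |y - a| / (2 * |b - a|))|
      ≤ |b - a| * (|x - y| / (2 * |b - a|)) := by
        gcongr
        rw [max_comm 0, max_comm 0]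
        refine (abs_max_sub_max_le_abs _ _ _).trans ?_
        have h2 : (0 : ℝ) ≤ 2 * |b - a| := by positivity
        rw [sub_sub_sub_cancel_left, ← sub_div, abs_div, abs_of_nonneg h2]
        refine div_le_div_of_nonneg_right ((abs_abs_sub_abs_le_abs_sub _ _).trans_eq ?_) h2
        rw [sub_sub_sub_cancel_right, abs_sub_comm]
    _ = |x - y| / 2 * (|b - a| / |b - a|) := by ring
    _ ≤ |x - y| / 2 := mul_le_of_le_one_right (by positivity) (div_self_le_one _)

lemma tent_strictMono : StrictMono (tent a b) := by
  intro x y hxy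
  have := abs_sub_lt_iff.1 ((abs_tent_sub_sub_le (a := a) (b := b) y x).trans_lt
    (half_lt_self (abs_pos.2 (sub_ne_zero.2 hxy.ne'))))
  rw [abs_of_pos (sub_pos.2 hxy)] at this
  linarith [this.2]

lemma tent_surjective : Function.Surjective (tent a b) := by
  refine Continuous.surjective (by unfold tent; fun_prop) ?_ ?_
  · refine tendsto_atTop_mono (fun s => ?_)
      (tendsto_atTop_add_const_right _ (-|b - a|) tendsto_id)
    linarith [id_eq s, (abs_le.1 (abs_tent_sub_le (a := a) (b := b) s)).1]
  · refine tendsto_atBot_mono (fun s => ?_)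
      (tendsto_atBot_add_const_right _ (|b - a|) tendsto_id)
    linarith [id_eq s, (abs_le.1 (abs_tent_sub_le (a := a) (b := b) s)).2]

end Tent

lemma isTimeChange_id : IsTimeChange id := ⟨strictMono_id, Function.bijective_id⟩

namespace IsTimeChange

variable {l φ : ℝ≥0 → ℝ≥0}

lemma comp (hl : IsTimeChange l) (hφ : IsTimeChange φ) : IsTimeChange (l ∘ φ) :=
  ⟨hl.1.comp hφ.1, hl.2.comp hφ.2⟩

lemma continuous (hl : IsTimeChange l) : Continuous l :=
  hl.1.monotone.continuous_of_surjective hl.2.2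

lemma shift (hl : IsTimeChange l) (a : ℝ≥0) : IsTimeChange fun s => l (a + s) - l a := by
  have hle : ∀ s, l a ≤ l (a + s) := fun s => hl.1.monotone le_self_add
  have hmono : StrictMono fun s => l (a + s) - l a := fun x y hxy =>
    tsub_lt_tsub_right_of_le (hle x) (hl.1 (add_lt_add_right hxy a))
  refine ⟨hmono, hmono.injective, fun y => ?_⟩
  obtain ⟨u, hu⟩ := hl.2.2 (l a + y)
  have hau : a ≤ u := hl.1.le_iff_le.1 (hu ▸ le_self_add)
  exact ⟨u - a, by simp only [add_tsub_cancel_of_le hau, hu, add_tsub_cancel_left]⟩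

lemma tendsto_nhdsLT (hl : IsTimeChange l) (x : ℝ≥0) : Tendsto l (𝓝[<] x) (𝓝[<] (l x)) :=
  hl.continuous.continuousWithinAt.tendsto_nhdsWithin fun _ hy => hl.1 hy

end IsTimeChange

lemma isTimeChange_toNNReal {g : ℝ → ℝ} (hg : StrictMono g) (hsurj : Function.Surjective g)
    (h0 : g 0 = 0) : IsTimeChange fun s : ℝ≥0 => (g s).toNNReal := by
  have hmono : StrictMono fun s : ℝ≥0 => (g s).toNNReal := fun x y hxy =>
    have hlt : g x < g y := hg (NNReal.coe_lt_coe.2 hxy)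
    Real.toNNReal_lt_toNNReal_iff'.2 ⟨hlt, (h0 ▸ hg.monotone x.2).trans_lt hlt⟩
  refine ⟨hmono, hmono.injective, fun y => ?_⟩
  obtain ⟨s, hs⟩ := hsurj y
  have hs0 : 0 ≤ s := hg.le_iff_le.1 (by rw [h0, hs]; exact y.2)
  exact ⟨s.toNNReal, by simp only [Real.coe_toNNReal _ hs0, hs, Real.toNNReal_coe]⟩

lemma exists_isTimeChange_apply_eq (a b : ℝ≥0) :
    ∃ φ : ℝ≥0 → ℝ≥0, IsTimeChange φ ∧ (2 * dist b a ≤ a → φ a = b) ∧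
      (∀ s, dist (φ s) s ≤ dist b a) ∧ ∀ s, φ s ≠ s → dist s a < 2 * dist b a := by
  by_cases hab : 2 * dist b a ≤ a
  · have hφs : ∀ s : ℝ≥0, ¬ dist s a < 2 * dist b a → (tent a b s).toNNReal = s := by
      intro s hs
      rw [not_lt, NNReal.dist_eq, NNReal.dist_eq] at hs
      rw [tent_eq_self hs, Real.toNNReal_coe]
    refine ⟨fun s => (tent a b s).toNNReal,
      isTimeChange_toNNReal tent_strictMono tent_surjective ?_, fun _ => by simp [tent_self],
      fun s => ?_, fun s hs => not_not.1 (mt (hφs s) hs)⟩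
    · exact tent_eq_self (by rwa [zero_sub, abs_neg, NNReal.abs_eq, ← NNReal.dist_eq])
    · calc dist (tent a b s).toNNReal s = dist (tent a b s).toNNReal (s : ℝ).toNNReal := by
            rw [Real.toNNReal_coe]
        _ ≤ dist (tent a b s) s := by
            simpa using Real.lipschitzWith_toNNReal.dist_le_mul (tent a b s) s
        _ ≤ dist b a := by rw [Real.dist_eq, NNReal.dist_eq]; exact abs_tent_sub_le s
  · exact ⟨id, isTimeChange_id, fun h => absurd h hab, fun s => by simp, fun s h => absurd rfl h⟩

namespace Cadlag

variable {V : Type*} [MetricSpace V] {f g : ℝ≥0 → V} {x : ℝ≥0}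

lemma tendsto_leftLim (hf : Cadlag f) (hx : 0 < x) :
    Tendsto f (𝓝[<] x) (𝓝 (Function.leftLim f x)) := by
  obtain ⟨y, hy⟩ := hf.2 x hx
  have : (𝓝[<] x).NeBot := nhdsLT_neBot_of_exists_lt ⟨0, hx⟩
  rwa [leftLim_eq_of_tendsto hy]

lemma comp {l : ℝ≥0 → ℝ≥0} (hf : Cadlag f) (hl : IsTimeChange l) : Cadlag (f ∘ l) :=
  ⟨fun t => (hf.1 (l t)).comp hl.continuous.continuousWithinAt fun _ h => hl.1.monotone h,
    fun t ht => ⟨_, (hf.tendsto_leftLim (pos_of_gt (hl.1 ht))).comp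
      (hl.tendsto_nhdsLT t)⟩⟩

lemma jumpSize_comp {l : ℝ≥0 → ℝ≥0} (hf : Cadlag f) (hl : IsTimeChange l) (hx : 0 < x) :
    jumpSize (f ∘ l) x = jumpSize f (l x) := by
  have : (𝓝[<] x).NeBot := nhdsLT_neBot_of_exists_lt ⟨0, hx⟩
  have := leftLim_eq_of_tendsto ((hf.tendsto_leftLim (pos_of_gt (hl.1 hx))).comp
      (hl.tendsto_nhdsLT x))
  simp only [jumpSize, this, Function.comp_apply]

lemma continuousAt_of_jumpSize_eq_zero (hf : Cadlag f) (hx : 0 < x) (h : jumpSize f x = 0) :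
    ContinuousAt f x := by
  have hleft := hf.tendsto_leftLim hx
  rw [← dist_eq_zero.1 h] at hleft
  rw [ContinuousAt, ← nhdsLT_sup_nhdsGE]
  exact hleft.sup (hf.1 x)

lemma dist_jumpSize_le (hf : Cadlag f) (hg : Cadlag g) (hx : 0 < x) {ε : ℝ}
    (h : ∀ y ≤ x, dist (f y) (g y) ≤ ε) : dist (jumpSize f x) (jumpSize g x) ≤ 2 * ε := by
  have : (𝓝[<] x).NeBot := nhdsLT_neBot_of_exists_lt ⟨0, hx⟩
  have hlim : dist (Function.leftLim f x) (Function.leftLim g x) ≤ ε :=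
    le_of_tendsto ((hf.tendsto_leftLim hx).dist (hg.tendsto_leftLim hx))
      (eventually_nhdsWithin_of_forall fun y hy => h y (le_of_lt hy))
  calc dist (jumpSize f x) (jumpSize g x)
      ≤ dist (f x) (g x) + dist (Function.leftLim f x) (Function.leftLim g x) :=
        dist_dist_dist_le _ _ _ _
    _ ≤ 2 * ε := by linarith [h x le_rfl]

lemma tendsto_leftLim_of_tendsto (hf : Cadlag f) {s : Set ℝ≥0} {a : ℝ≥0} {L : V}
    (hs : ∀ᶠ y in 𝓝[s] a, 0 < y ∧ 𝓝[<] y ≤ 𝓝[s] y) (h : Tendsto f (𝓝[s] a) (𝓝 L)) :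
    Tendsto (Function.leftLim f) (𝓝[s] a) (𝓝 L) := by
  refine (closed_nhds_basis L).tendsto_right_iff.2 fun K ⟨hK, hKc⟩ => ?_
  filter_upwards [hs, eventually_eventually_nhdsWithin.2 (h hK)] with y ⟨hy, hys⟩ hyK
  have : (𝓝[<] y).NeBot := nhdsLT_neBot_of_exists_lt ⟨0, hy⟩
  exact hKc.mem_of_tendsto (hf.tendsto_leftLim hy) (hys hyK)

lemma tendsto_jumpSize_nhdsNE (hf : Cadlag f) {a : ℝ≥0} (ha : 0 < a) :
    Tendsto (jumpSize f) (𝓝[≠] a) (𝓝 0) := by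
  have key : ∀ {s : Set ℝ≥0} {L : V}, (∀ᶠ y in 𝓝[s] a, 0 < y ∧ 𝓝[<] y ≤ 𝓝[s] y) →
      Tendsto f (𝓝[s] a) (𝓝 L) → Tendsto (jumpSize f) (𝓝[s] a) (𝓝 0) := fun hs h => by
    have := h.dist (hf.tendsto_leftLim_of_tendsto hs h)
    rwa [dist_self] at this
  rw [← nhdsLT_sup_nhdsGT, tendsto_sup]
  constructor
  · refine key ?_ (hf.tendsto_leftLim ha)
    filter_upwards [Ioo_mem_nhdsLT ha] with y hy
    exact ⟨hy.1, nhdsWithin_mono _ (Iio_subset_Iio hy.2.le)⟩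
  · refine key ?_ ((hf.1 a).mono_left (nhdsWithin_mono _ Ioi_subset_Ici_self))
    filter_upwards [self_mem_nhdsWithin] with y (hy : a < y)
    exact ⟨ha.trans hy, (nhdsWithin_eq_nhds.2 (Ioi_mem_nhds hy)).symm ▸ nhdsWithin_le_nhds⟩

end Cadlag

section UniformConvergence

variable {ι α β : Type*} {p : Filter ι}

lemma tendstoUniformly_iff_tendsto_iSup_edist [PseudoEMetricSpace β] {F : ι → α → β}
    {f : α → β} :
    TendstoUniformly F f p ↔ Tendsto (fun i => ⨆ x, edist (F i x) (f x)) p (𝓝 0) :=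
  (UniformFun.tendsto_iff_tendstoUniformly (F := fun i => UniformFun.ofFun (F i))
    (f := UniformFun.ofFun f)).symm.trans tendsto_iff_edist_tendsto_0

lemma tendstoUniformlyOn_iff_tendsto_iSup_edist [PseudoEMetricSpace β] {F : ι → α → β}
    {f : α → β} {s : Set α} :
    TendstoUniformlyOn F f p s ↔ Tendsto (fun i => ⨆ x : s, edist (F i x) (f x)) p (𝓝 0) := by
  rw [tendstoUniformlyOn_iff_tendstoUniformly_comp_coe, tendstoUniformly_iff_tendsto_iSup_edist]
  rfl

lemma TendstoUniformly.tendsto_of_tendsto_apply [UniformSpace α] {l : ι → α → α}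
    (hl : TendstoUniformly l id p) {c : ι → α} {x : α}
    (h : Tendsto (fun i => l i (c i)) p (𝓝 x)) : Tendsto c p (𝓝 x) :=
  h.congr_uniformity ((tendstoUniformly_iff_tendsto.1 hl).comp
    (tendsto_id.prodMk tendsto_top)).uniformity_symm

lemma tendstoUniformly_of_dist_le [PseudoMetricSpace β] {F : ι → α → β} {f : α → β}
    {ρ : ι → ℝ} (h : ∀ i x, dist (F i x) (f x) ≤ ρ i) (hρ : Tendsto ρ p (𝓝 0)) :
    TendstoUniformly F f p := by
  rw [Metric.tendstoUniformly_iff]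
  intro ε hε
  filter_upwards [hρ.eventually (gt_mem_nhds hε)] with i hi x
  exact (dist_comm (f x) _ ▸ h i x).trans_lt hi

lemma tendstoUniformly_comp_of_eventually_eq_id [UniformSpace β] {g : α → β} {φ : ι → α → α}
    (h : ∀ᶠ i in p, ∀ x, φ i x = x) : TendstoUniformly (fun i => g ∘ φ i) g p := fun _ hu =>
  h.mono fun i hi x => by simpa [hi x] using refl_mem_uniformity hu

variable [PseudoMetricSpace α] [PseudoMetricSpace β]

lemma TendstoUniformly.comp_of_id {γ : Type*} {l : ι → α → α} (hl : TendstoUniformly l id p)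
    {φ : ι → γ → α} {ψ : γ → α} (hφ : TendstoUniformly φ ψ p) :
    TendstoUniformly (fun i => l i ∘ φ i) ψ p := by
  rw [Metric.tendstoUniformly_iff] at *
  intro ε hε
  filter_upwards [hl (ε / 2) (half_pos hε), hφ (ε / 2) (half_pos hε)] with i hl hφ x
  calc dist (ψ x) (l i (φ i x)) ≤ dist (ψ x) (φ i x) + dist (φ i x) (l i (φ i x)) :=
        dist_triangle _ _ _
    _ < ε / 2 + ε / 2 := add_lt_add (hφ x) (hl _)
    _ = ε := add_halves ε

lemma tendstoUniformly_comp_of_continuousAt {g : α → β} {a : α} (hg : ContinuousAt g a)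
    {φ : ι → α → α} {ρ : ι → ℝ} (hρ : Tendsto ρ p (𝓝 0)) (hdist : ∀ i x, dist (φ i x) x ≤ ρ i)
    (hsupp : ∀ i x, φ i x ≠ x → dist x a < ρ i) : TendstoUniformly (fun i => g ∘ φ i) g p := by
  rw [Metric.tendstoUniformly_iff]
  intro ε hε
  obtain ⟨δ, hδ, hgδ⟩ := Metric.continuousAt_iff.1 hg (ε / 2) (half_pos hε)
  filter_upwards [hρ.eventually (gt_mem_nhds (half_pos hδ))] with i hi x
  by_cases hx : φ i x = x
  · simpa [hx] using hε
  have hxa := hsupp i x hx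
  calc dist (g x) (g (φ i x)) ≤ dist (g x) (g a) + dist (g (φ i x)) (g a) :=
        dist_triangle_right _ _ _
    _ < ε / 2 + ε / 2 := by
        refine add_lt_add (hgδ (by linarith)) (hgδ ?_)
        linarith [dist_triangle (φ i x) x a, hdist i x]
    _ = ε := add_halves ε

end UniformConvergence

structure J1TendstoWith {V ι : Type*} [PseudoMetricSpace V] (p : Filter ι)
    (l : ι → ℝ≥0 → ℝ≥0) (f : ι → ℝ≥0 → V) (g : ℝ≥0 → V) : Prop where
  isTimeChange : ∀ i, IsTimeChange (l i)
  tendstoUniformly : TendstoUniformly l id p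
  tendstoUniformlyOn : ∀ m, TendstoUniformlyOn (fun i => f i ∘ l i) g p (Icc 0 m)

section J1

variable {V ι : Type*} [PseudoMetricSpace V] {p : Filter ι} {f : ι → ℝ≥0 → V} {g : ℝ≥0 → V}
  {l : ι → ℝ≥0 → ℝ≥0}

lemma j1Tendsto_iff_exists_j1TendstoWith :
    J1Tendsto p f g ↔ ∃ l, J1TendstoWith p l f g := by
  constructor
  · rintro ⟨l, hl, hlu, M, hM, hconv⟩
    refine ⟨l, hl, tendstoUniformly_iff_tendsto_iSup_edist.2 hlu, fun m => ?_⟩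
    obtain ⟨m', hm', hmm'⟩ := hM m
    exact ((tendstoUniformlyOn_iff_tendsto_iSup_edist (F := fun i => f i ∘ l i)).2
      (hconv m' hm')).mono (Icc_subset_Icc_right hmm')
  · rintro ⟨l, hl, hlu, hconv⟩
    exact ⟨l, hl, tendstoUniformly_iff_tendsto_iSup_edist.1 hlu, univ,
      fun r => ⟨r, mem_univ r, le_rfl⟩,
      fun m _ => (tendstoUniformlyOn_iff_tendsto_iSup_edist (F := fun i => f i ∘ l i)).1
        (hconv m)⟩

namespace J1TendstoWith

lemma comp (hl : J1TendstoWith p l f g) {φ : ι → ℝ≥0 → ℝ≥0} (hφ : ∀ i, IsTimeChange (φ i))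
    (hφu : TendstoUniformly φ id p) (hgφ : TendstoUniformly (fun i => g ∘ φ i) g p) :
    J1TendstoWith p (fun i => l i ∘ φ i) f g where
  isTimeChange i := (hl.isTimeChange i).comp (hφ i)
  tendstoUniformly := hl.tendstoUniformly.comp_of_id hφu
  tendstoUniformlyOn m := by
    rw [Metric.tendstoUniformlyOn_iff]
    intro ε hε
    filter_upwards [Metric.tendstoUniformlyOn_iff.1 (hl.tendstoUniformlyOn (m + 1)) (ε / 2)
      (half_pos hε), Metric.tendstoUniformly_iff.1 hgφ (ε / 2) (half_pos hε),
      Metric.tendstoUniformly_iff.1 hφu 1 one_pos] with i hl hg hφ s hs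
    have hφs : φ i s ∈ Icc 0 (m + 1) := by
      refine ⟨zero_le, ?_⟩
      have h1 := (abs_sub_lt_iff.1 (NNReal.dist_eq _ _ ▸ hφ s)).2
      rw [id] at h1
      have h2 : (s : ℝ) ≤ m := hs.2
      rw [← NNReal.coe_le_coe, NNReal.coe_add, NNReal.coe_one]
      linarith
    calc dist (g s) (f i (l i (φ i s)))
        ≤ dist (g s) (g (φ i s)) + dist (g (φ i s)) (f i (l i (φ i s))) := dist_triangle _ _ _
      _ < ε / 2 + ε / 2 := add_lt_add (hg s) (hl _ hφs)
      _ = ε := add_halves ε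

lemma shift (hμ : J1TendstoWith p l f g) {a : ℝ≥0} {t : ι → ℝ≥0}
    (ht : ∀ᶠ i in p, l i a = t i) :
    J1TendstoWith p (fun i s => l i (a + s) - l i a) (fun i => shiftMap (t i) (f i))
      (shiftMap a g) where
  isTimeChange i := (hμ.isTimeChange i).shift a
  tendstoUniformly := by
    rw [Metric.tendstoUniformly_iff]
    intro ε hε
    filter_upwards [Metric.tendstoUniformly_iff.1 hμ.tendstoUniformly (ε / 2) (half_pos hε)]
      with i hi s
    have hle := (hμ.isTimeChange i).1.monotone (le_self_add : a ≤ a + s)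
    have h1 := hi (a + s)
    have h2 := hi a
    simp only [id, NNReal.dist_eq] at h1 h2 ⊢
    rw [NNReal.coe_sub hle]
    push_cast at h1
    rw [abs_lt] at *
    constructor <;> linarith
  tendstoUniformlyOn m := by
    refine (((hμ.tendstoUniformlyOn (a + m)).comp (a + ·)).mono fun s hs =>
      ⟨zero_le, add_le_add_right hs.2 a⟩).congr ?_
    filter_upwards [ht] with i hi s _
    simp only [shiftMap, Function.comp_apply, ← hi,
      add_tsub_cancel_of_le ((hμ.isTimeChange i).1.monotone le_self_add)]

end J1TendstoWith

end J1

section Jumps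

variable {V ι : Type*} [MetricSpace V] {p : Filter ι}

lemma tendsto_dist_jumpSize {G : ι → ℝ≥0 → V} {g : ℝ≥0 → V} (hG : ∀ i, Cadlag (G i))
    (hg : Cadlag g) {m : ℝ≥0} (hGg : TendstoUniformlyOn G g p (Icc 0 m)) {c : ι → ℝ≥0}
    (hc : ∀ᶠ i in p, 0 < c i ∧ c i ≤ m) :
    Tendsto (fun i => dist (jumpSize (G i) (c i)) (jumpSize g (c i))) p (𝓝 0) := by
  rw [Metric.tendsto_nhds]
  intro ε hε
  filter_upwards [Metric.tendstoUniformlyOn_iff.1 hGg (ε / 3) (by positivity), hc]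
    with i hi ⟨hci, hcm⟩
  rw [Real.dist_0_eq_abs, abs_of_nonneg dist_nonneg]
  calc _ ≤ 2 * (ε / 3) := (hG i).dist_jumpSize_le hg hci fun y hy =>
        (dist_comm (g y) _ ▸ hi y ⟨zero_le, hy.trans hcm⟩).le
    _ < ε := by linarith

lemma J1TendstoWith.eventually_eq_of_jumpSize_ne_zero {f : ι → ℝ≥0 → V} {g : ℝ≥0 → V}
    {l : ι → ℝ≥0 → ℝ≥0} (hl : J1TendstoWith p l f g) (hf : ∀ i, Cadlag (f i)) (hg : Cadlag g)
    {a : ℝ≥0} (ha : 0 < a) {c t : ι → ℝ≥0} (hc : Tendsto c p (𝓝 a)) (hlc : ∀ i, l i (c i) = t i)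
    (hjump : Tendsto (fun i => jumpSize (f i) (t i)) p (𝓝 (jumpSize g a)))
    (hne : jumpSize g a ≠ 0) : ∀ᶠ i in p, c i = a := by
  have hcpos : ∀ᶠ i in p, 0 < c i ∧ c i ≤ a + 1 :=
    (hc.eventually (Ioo_mem_nhds ha (lt_add_one a))).mono fun i h => ⟨h.1, h.2.le⟩
  have hjc : Tendsto (fun i => jumpSize g (c i)) p (𝓝 (jumpSize g a)) := by
    refine hjump.congr_dist ((tendsto_dist_jumpSize (fun i => (hf i).comp (hl.isTimeChange i))
      hg (hl.tendstoUniformlyOn (a + 1)) hcpos).congr' ?_)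
    filter_upwards [hcpos] with i hi
    rw [(hf i).jumpSize_comp (hl.isTimeChange i) hi.1, hlc]
  have hJ : 0 < jumpSize g a := dist_nonneg.lt_of_ne' hne
  have hbig : ∀ᶠ i in p, jumpSize g a / 2 < jumpSize g (c i) :=
    hjc.eventually (lt_mem_nhds (half_lt_self hJ))
  have hsmall : ∀ᶠ i in p, c i ≠ a → jumpSize g (c i) < jumpSize g a / 2 :=
    hc.eventually (eventually_nhdsWithin_iff.1
      ((hg.tendsto_jumpSize_nhdsNE ha).eventually (gt_mem_nhds (half_pos hJ))))
  filter_upwards [hbig, hsmall] with i hbig hsmall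
  by_contra h
  exact lt_asymm hbig (hsmall h)

end Jumps

theorem statement2_general {V : Type*} [MetricSpace V]
    (f : ℕ → ℝ≥0 → V) (F : ℝ≥0 → V) (t : ℕ → ℝ≥0) (t0 : ℝ≥0)
    (hfc : ∀ n, Cadlag (f n)) (hFc : Cadlag F)
    (ht0 : 0 < t0) (ht : Filter.Tendsto t Filter.atTop (nhds t0))
    (hfF : J1Tendsto Filter.atTop f F)
    (hjump : Filter.Tendsto (fun n => jumpSize (f n) (t n)) Filter.atTop
      (nhds (jumpSize F t0))) :
    J1Tendsto Filter.atTop (fun n => shiftMap (t n) (f n)) (shiftMap t0 F) := by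
  obtain ⟨l, hl⟩ := j1Tendsto_iff_exists_j1TendstoWith.1 hfF
  choose c hc using fun n => (hl.isTimeChange n).2.2 (t n)
  have hc_lim : Tendsto c atTop (𝓝 t0) :=
    hl.tendstoUniformly.tendsto_of_tendsto_apply (by simpa only [hc] using ht)
  choose φ hφ hφ_apply hφ_dist hφ_supp using fun n => exists_isTimeChange_apply_eq t0 (c n)
  have hρ : Tendsto (fun n => 2 * dist (c n) t0) atTop (𝓝 0) := by
    simpa using (hc_lim.dist (tendsto_const_nhds (x := t0))).const_mul 2
  have hφ_dist' : ∀ n s, dist (φ n s) s ≤ 2 * dist (c n) t0 := fun n s =>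
    (hφ_dist n s).trans (le_mul_of_one_le_left dist_nonneg one_le_two)
  have hφ_id : TendstoUniformly φ id atTop := tendstoUniformly_of_dist_le hφ_dist' hρ
  have hFφ : TendstoUniformly (fun n => F ∘ φ n) F atTop := by
    by_cases hj : jumpSize F t0 = 0
    · exact tendstoUniformly_comp_of_continuousAt
        (hFc.continuousAt_of_jumpSize_eq_zero ht0 hj) hρ hφ_dist' hφ_supp
    -- at a jump of `F` the times `c n` eventually equal `t0`, so `φ n` is eventually the identity
    · refine tendstoUniformly_comp_of_eventually_eq_id ?_
      filter_upwards [hl.eventually_eq_of_jumpSize_ne_zero hfc hFc ht0 hc_lim hc hjump hj]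
        with n hn s
      by_contra h
      exact dist_nonneg.not_gt (by simpa [hn] using hφ_supp n s h)
  have hμt : ∀ᶠ n in atTop, l n (φ n t0) = t n := by
    filter_upwards [hρ.eventually (ge_mem_nhds (NNReal.coe_pos.2 ht0))] with n hn
    rw [hφ_apply n hn, hc]
  exact j1Tendsto_iff_exists_j1TendstoWith.2 ⟨_, (hl.comp hφ hφ_id hFφ).shift hμt⟩

/-- continuity of the shift operator. -/
theorem statement2 {V : Type*} [MetricSpace V] [PolishSpace V]
    (f : ℕ → ℝ≥0 → V) (F : ℝ≥0 → V) (t : ℕ → ℝ≥0) (t0 : ℝ≥0)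
    (hfc : ∀ n, Cadlag (f n)) (hFc : Cadlag F)
    (ht0 : 0 < t0) (ht : Filter.Tendsto t Filter.atTop (nhds t0))
    (hfF : J1Tendsto Filter.atTop f F)
    (hjump : Filter.Tendsto (fun n => jumpSize (f n) (t n)) Filter.atTop
      (nhds (jumpSize F t0))) :
    J1Tendsto Filter.atTop (fun n => shiftMap (t n) (f n)) (shiftMap t0 F) :=
  statement2_general f F t t0 hfc hFc ht0 ht hfF hjump
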